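/- arXiv:2207.06386 — 8 statements merged into one kernel-verified Lean document; each statement's English description precedes it below -/
import Mathlib

section
/- Let n ≥ 3 and let σ be a sawtooth dot graph over {1,…,n−1}. If there exists a value k ∈ {1,…,n−1} such that more than n(n−1) entries of the sequence σ are equal to k, then σ is dot reducible. -/
/-- The underlying sequence of a dot graph given as a list of ascending
segments `(p, q)`: segment `(p, q)` contributes `p, p+1, …, q`. -/
def toSeq (L : List (ℕ × ℕ)) : List ℕ :=
  L.flatMap fun s => List.range' s.1 (s.2 - s.1 + 1)

/-- `L` is the list of maximal ascending segments of a sawtooth dot graph over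
`{1, …, n-1}`: `1 ≤ pᵢ ≤ qᵢ ≤ n-1` for all `i`, and `p_{i+1} ≤ q_i` for all `i`. -/
def IsSawtooth (n : ℕ) (L : List (ℕ × ℕ)) : Prop :=
  (∀ s ∈ L, 1 ≤ s.1 ∧ s.1 ≤ s.2 ∧ s.2 ≤ n - 1) ∧
  ∀ (i : ℕ) (h : i + 1 < L.length),
    (L.get ⟨i + 1, h⟩).1 ≤ (L.get ⟨i, Nat.lt_of_succ_lt h⟩).2

/-- A sawtooth dot graph (given by its segment list) is dot reducible if it
contains a horizontal line, a box, a hexagon of type 1 or 2, a double box, or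
a double hexagon. -/
def DotReducible (L : List (ℕ × ℕ)) : Prop :=
  -- horizontal line
  (∃ (i : ℕ) (h : i + 1 < L.length),
      (L.get ⟨i, Nat.lt_of_succ_lt h⟩).2 = (L.get ⟨i + 1, h⟩).1) ∨
  -- box
  (∃ i j : Fin L.length, i < j ∧
      (L.get i).1 ≤ (L.get j).1 ∧ (L.get i).2 ≤ (L.get j).2) ∨
  -- hexagon of type 1
  (∃ i j l : Fin L.length, i < j ∧ j < l ∧
      (L.get i).1 ≤ (L.get j).1 ∧ (L.get i).2 ≤ (L.get l).2 ∧
      (L.get l).1 ≤ (L.get j).2) ∨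
  -- hexagon of type 2
  (∃ i j l : Fin L.length, i < j ∧ j < l ∧
      (L.get i).1 ≤ (L.get l).1 ∧ (L.get j).2 ≤ (L.get l).2 ∧
      (L.get j).1 ≤ (L.get i).2) ∨
  -- double box
  (∃ i j l : Fin L.length, i < j ∧ j < l ∧
      (L.get i).2 ≤ (L.get j).2 ∧ (L.get j).1 ≤ (L.get l).1 ∧
      (L.get i).1 ≤ (L.get l).2 + 1) ∨
  -- double hexagon
  (∃ i j l m : Fin L.length, i < j ∧ j ≤ l ∧ l < m ∧
      (L.get i).1 ≤ (L.get j).1 ∧ (L.get l).2 ≤ (L.get m).2)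

/-- The spindle at `k` over `{1, …, n-1}`: segments `(s, n-1)` for
`s = n-1` down to `k+2`, then `(1, n-1)`, then `(1, t)` for `t = k` down to `1`. -/
def spindle (n k : ℕ) : List (ℕ × ℕ) :=
  ((List.range (n - 2 - k)).map fun i => (n - 1 - i, n - 1)) ++
    [(1, n - 1)] ++
    ((List.range k).map fun i => (1, k - i))

/-- `L` is a maximal dot irreducible sawtooth dot graph over `{1, …, n-1}`:
it is dot irreducible, and every sawtooth dot graph over `{1, …, n-1}`
containing it as a proper subsequence is dot reducible. -/
def MaxDotIrreducible (n : ℕ) (L : List (ℕ × ℕ)) : Prop :=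
  IsSawtooth n L ∧ ¬ DotReducible L ∧
  ∀ M : List (ℕ × ℕ), IsSawtooth n M → List.Sublist (toSeq L) (toSeq M) →
    toSeq L ≠ toSeq M → DotReducible M

/-! Each segment contains every value at most once, so the graph has more than
`n(n-1) ≥ (n-1)²` segments. There are only `(n-1)²` possible segments, hence two
of them coincide, and two equal segments form a box. -/

lemma count_toSeq_le_length (k : ℕ) (L : List (ℕ × ℕ)) : (toSeq L).count k ≤ L.length := by
  rw [toSeq, List.count_flatMap]
  refine (List.sum_le_card_nsmul _ 1 ?_).trans (by simp)
  simp only [List.mem_map, Function.comp_apply]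
  rintro _ ⟨s, -, rfl⟩
  exact List.nodup_iff_count_le_one.1 (List.nodup_range' ..) k

lemma dotReducible_of_get_eq {L : List (ℕ × ℕ)} {i j : Fin L.length} (hij : i ≠ j)
    (h : L.get i = L.get j) : DotReducible L := by
  refine Or.inr (Or.inl ?_)
  rcases hij.lt_or_gt with hlt | hlt
  · exact ⟨i, j, hlt, by rw [h], by rw [h]⟩
  · exact ⟨j, i, hlt, by rw [h], by rw [h]⟩

lemma dotReducible_of_sq_lt_length {n : ℕ} {L : List (ℕ × ℕ)}
    (hL : ∀ s ∈ L, 1 ≤ s.1 ∧ s.1 ≤ s.2 ∧ s.2 ≤ n - 1) (hlen : (n - 1) ^ 2 < L.length) :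
    DotReducible L := by
  set pairs : Finset (ℕ × ℕ) := Finset.Icc 1 (n - 1) ×ˢ Finset.Icc 1 (n - 1) with hpairs
  have hcard : pairs.card < (Finset.univ : Finset (Fin L.length)).card := by
    simpa [hpairs, sq] using hlen
  have hmaps : Set.MapsTo L.get (Finset.univ : Finset (Fin L.length)) pairs := by
    intro i _
    have := hL _ (List.get_mem L i)
    simp only [hpairs, Finset.coe_product, Finset.coe_Icc, Set.mem_prod, Set.mem_Icc]
    omega
  obtain ⟨i, -, j, -, hij, h⟩ := Finset.exists_ne_map_eq_of_card_lt_of_maps_to hcard hmaps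
  exact dotReducible_of_get_eq hij h

theorem many_repeats_dot_reducible_general (n : ℕ)
    (L : List (ℕ × ℕ)) (hL : IsSawtooth n L)
    (h : ∃ k : ℕ, 1 ≤ k ∧ k ≤ n - 1 ∧ n * (n - 1) < (toSeq L).count k) :
    DotReducible L := by
  obtain ⟨k, -, -, hcount⟩ := h
  refine dotReducible_of_sq_lt_length hL.1 ?_
  calc (n - 1) ^ 2 ≤ n * (n - 1) := by rw [sq]; exact Nat.mul_le_mul_right _ (Nat.sub_le n 1)
    _ < (toSeq L).count k := hcount
    _ ≤ L.length := count_toSeq_le_length k L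

/-- If some value `k ∈ {1, …, n-1}` occurs more than `n(n-1)` times in the
underlying sequence of a sawtooth dot graph over `{1, …, n-1}`, then the
graph is dot reducible. -/
theorem many_repeats_dot_reducible (n : ℕ) (hn : 3 ≤ n)
    (L : List (ℕ × ℕ)) (hL : IsSawtooth n L)
    (h : ∃ k : ℕ, 1 ≤ k ∧ k ≤ n - 1 ∧ n * (n - 1) < (toSeq L).count k) :
    DotReducible L :=
  many_repeats_dot_reducible_general n L hL h
end

section
/- Let n ≥ 3 and 0 ≤ k ≤ n−2. The spindle at k over {1,…,n−1} is dot irreducible, i.e. it contains no horizontal line, no box, no hexagon of type 1, no hexagon of type 2, no double box, and no double hexagon. -/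
/-- Away from the waist segment at index `a` (`(1, n-1)` in a spindle), one of the two endpoint
sequences is strictly decreasing: the left endpoints up to `a`, the right endpoints from `a` on.
Every reducible configuration compares two segments in a way that this forbids; the double box
is squeezed onto the waist and then excluded by the last field. -/
structure IsSpindleShaped (L : List (ℕ × ℕ)) (a : ℕ) : Prop where
  fst_lt_of_lt_waist : ∀ i j : Fin L.length, i < j → (i : ℕ) < a → (L.get j).1 < (L.get i).1
  snd_lt_of_waist_lt : ∀ i j : Fin L.length, i < j → a < (j : ℕ) → (L.get j).2 < (L.get i).2
  fst_succ_lt_snd : ∀ (i : ℕ) (h : i + 1 < L.length),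
    (L.get ⟨i + 1, h⟩).1 < (L.get ⟨i, Nat.lt_of_succ_lt h⟩).2
  snd_add_one_lt_fst : ∀ i l : Fin L.length, (i : ℕ) < a → a < (l : ℕ) →
    (L.get l).2 + 1 < (L.get i).1

namespace IsSpindleShaped

variable {L : List (ℕ × ℕ)} {a : ℕ}

theorem waist_le_of_fst_le (hL : IsSpindleShaped L a) {i j : Fin L.length} (hij : i < j)
    (hle : (L.get i).1 ≤ (L.get j).1) : a ≤ i := by
  by_contra! hi
  exact (hL.fst_lt_of_lt_waist i j hij hi).not_ge hle

theorem le_waist_of_snd_le (hL : IsSpindleShaped L a) {i j : Fin L.length} (hij : i < j)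
    (hle : (L.get i).2 ≤ (L.get j).2) : (j : ℕ) ≤ a := by
  by_contra! hj
  exact (hL.snd_lt_of_waist_lt i j hij hj).not_ge hle

theorem not_dotReducible (hL : IsSpindleShaped L a) : ¬ DotReducible L := by
  rintro (⟨i, h, hline⟩ | ⟨i, j, hij, hp, hq⟩ | ⟨i, j, l, hij, hjl, hp, hq, -⟩ |
    ⟨i, j, l, hij, hjl, hp, hq, -⟩ | ⟨i, j, l, hij, hjl, hq, hp, hpq⟩ |
    ⟨i, j, l, m, hij, hjl, hlm, hp, hq⟩)
  · exact (hL.fst_succ_lt_snd i h).ne' hline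
  · have := hL.waist_le_of_fst_le hij hp
    have := hL.le_waist_of_snd_le hij hq
    omega
  · have := hL.waist_le_of_fst_le hij hp
    have := hL.le_waist_of_snd_le (hij.trans hjl) hq
    omega
  · have := hL.waist_le_of_fst_le (hij.trans hjl) hp
    have := hL.le_waist_of_snd_le hjl hq
    omega
  · have hj : (j : ℕ) = a :=
      le_antisymm (hL.le_waist_of_snd_le hij hq) (hL.waist_le_of_fst_le hjl hp)
    have := hL.snd_add_one_lt_fst i l (hj ▸ hij) (hj ▸ hjl)
    omega
  · have := hL.waist_le_of_fst_le hij hp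
    have := hL.le_waist_of_snd_le hlm hq
    omega

end IsSpindleShaped

theorem length_spindle (n k : ℕ) : (spindle n k).length = n - 2 - k + 1 + k := by
  simp only [spindle, List.length_append, List.length_map, List.length_range, List.length_singleton]

theorem getElem_spindle {n k : ℕ} (hk : k ≤ n - 2) {i : ℕ} (hi : i < (spindle n k).length) :
    (spindle n k)[i] =
      (if i < n - 2 - k then n - 1 - i else 1, if n - 2 - k < i then n - 1 - i else n - 1) := by
  rw [length_spindle] at hi
  simp only [spindle]
  rcases lt_trichotomy i (n - 2 - k) with hlt | rfl | hgt
  · rw [List.getElem_append_left (by simp; omega), List.getElem_append_left (by simpa using hlt)]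
    simp [hlt, hlt.not_gt]
  · rw [List.getElem_append_left (by simp), List.getElem_append_right (by simp)]
    simp
  · rw [List.getElem_append_right (by simp; omega)]
    simp only [List.length_append, List.length_map, List.length_range, List.length_singleton,
      List.getElem_map, List.getElem_range]
    rw [if_neg (by omega), if_pos hgt]
    congr 1
    omega

theorem isSpindleShaped_spindle {n k : ℕ} (hk : k ≤ n - 2) :
    IsSpindleShaped (spindle n k) (n - 2 - k) := by
  have hlen := length_spindle n k
  constructor <;> intros <;> simp only [List.get_eq_getElem, getElem_spindle hk, Fin.lt_def] at * <;>
    split_ifs <;> omega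

theorem spindle_dot_irreducible_general (n k : ℕ) (hk : k ≤ n - 2) :
    ¬ DotReducible (spindle n k) :=
  (isSpindleShaped_spindle hk).not_dotReducible

/-- Spindles are dot irreducible. -/
theorem spindle_dot_irreducible (n k : ℕ) (hn : 3 ≤ n) (hk : k ≤ n - 2) :
    ¬ DotReducible (spindle n k) :=
  spindle_dot_irreducible_general n k hk
end

section
/- Let n ≥ 3. Every dot irreducible sawtooth dot graph over {1,…,n−1} is a subsequence of some maximal dot irreducible sawtooth dot graph over {1,…,n−1}. -/
lemma nodup_of_irr (M : List (ℕ × ℕ)) (hirr : ¬ DotReducible M) : M.Nodup := by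
  rw [List.nodup_iff_injective_get]
  intro i j hij
  by_contra hne
  rcases lt_or_gt_of_ne hne with h | h
  · exact hirr (Or.inr (Or.inl ⟨i, j, h, le_of_eq (congrArg Prod.fst hij),
      le_of_eq (congrArg Prod.snd hij)⟩))
  · exact hirr (Or.inr (Or.inl ⟨j, i, h, le_of_eq (congrArg Prod.fst hij.symm),
      le_of_eq (congrArg Prod.snd hij.symm)⟩))

lemma toSeq_len_bound (n : ℕ) (M : List (ℕ × ℕ)) (hM : IsSawtooth n M)
    (hirr : ¬ DotReducible M) : (toSeq M).length ≤ (n-1)^2 * n := by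
  have hnd := nodup_of_irr M hirr
  have hlen : M.length ≤ (n-1)^2 := by
    have hsub : M.toFinset ⊆ (Finset.Icc 1 (n-1)) ×ˢ (Finset.Icc 1 (n-1)) := by
      intro s hs
      rw [List.mem_toFinset] at hs
      obtain ⟨h1, h2, h3⟩ := hM.1 s hs
      simp [Finset.mem_product, Finset.mem_Icc]
      omega
    have := Finset.card_le_card hsub
    rw [List.toFinset_card_of_nodup hnd] at this
    simpa [Nat.card_Icc, sq] using this
  have h2 : (toSeq M).length ≤ M.length * n := by
    rw [toSeq, List.length_flatMap]
    calc (M.map fun s => (List.range' s.1 (s.2 - s.1 + 1)).length).sum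
        ≤ (M.map fun s => (List.range' s.1 (s.2 - s.1 + 1)).length).length • n := by
          apply List.sum_le_card_nsmul
          intro x hx
          simp only [List.mem_map] at hx
          obtain ⟨s, hs, rfl⟩ := hx
          obtain ⟨h1, h2, h3⟩ := hM.1 s hs
          simp [List.length_range']
          omega
      _ = M.length * n := by simp [smul_eq_mul]
  exact h2.trans (Nat.mul_le_mul_right n hlen)

/-- Every dot irreducible sawtooth dot graph over `{1, …, n-1}` is a
subsequence of some maximal dot irreducible sawtooth dot graph. -/
theorem dot_irreducible_subseq_maximal (n : ℕ) (hn : 3 ≤ n)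
    (L : List (ℕ × ℕ)) (hL : IsSawtooth n L) (hirr : ¬ DotReducible L) :
    ∃ M : List (ℕ × ℕ), MaxDotIrreducible n M ∧ List.Sublist (toSeq L) (toSeq M) := by
  classical
  set S : Set ℕ := {k | ∃ M : List (ℕ × ℕ), IsSawtooth n M ∧ ¬ DotReducible M ∧
    List.Sublist (toSeq L) (toSeq M) ∧ (toSeq M).length = k} with hS
  have hne : S.Nonempty := ⟨(toSeq L).length, L, hL, hirr, List.Sublist.refl _, rfl⟩
  have hbdd : BddAbove S := by
    refine ⟨(n-1)^2 * n, fun k hk => ?_⟩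
    obtain ⟨M, hM, hMirr, _, rfl⟩ := hk
    exact toSeq_len_bound n M hM hMirr
  obtain ⟨M, hM, hMirr, hsub, hlen⟩ := Nat.sSup_mem hne hbdd
  refine ⟨M, ⟨hM, hMirr, ?_⟩, hsub⟩
  intro M' hM' hsub' hneq
  by_contra hirr'
  have hmem : (toSeq M').length ∈ S := ⟨M', hM', hirr', hsub.trans hsub', rfl⟩
  have hle : (toSeq M').length ≤ sSup S := le_csSup hbdd hmem
  have hge : (toSeq M).length ≤ (toSeq M').length := hsub'.length_le
  have : (toSeq M).length = (toSeq M').length := by omega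
  exact hneq (hsub'.eq_of_length this)
end

section
/- Let n ≥ 3 and 0 ≤ k ≤ n−2. In the spindle at k over {1,…,n−1}, the value k+1 occurs exactly once in the underlying sequence, and every other value of {1,…,n−1} occurs at least twice; in particular every spindle has a unique value occurring exactly once. -/
lemma count_range' (v : ℕ) : ∀ (m a : ℕ),
    (List.range' a m).count v = if a ≤ v ∧ v < a + m then 1 else 0 := by
  intro m
  induction m with
  | zero =>
    intro a
    simp only [List.range', List.count_nil]
    rw [if_neg (by omega)]
  | succ m ih =>
    intro a
    rw [List.range'_succ, List.count_cons, ih]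
    split_ifs with h1 h2 h3 <;> simp_all <;> omega

lemma toSeq_append (A B : List (ℕ × ℕ)) : toSeq (A ++ B) = toSeq A ++ toSeq B :=
  List.flatMap_append ..

lemma toSeq_singleton (s : ℕ × ℕ) : toSeq [s] = List.range' s.1 (s.2 - s.1 + 1) := by
  simp [toSeq]

lemma count_part1 (n v : ℕ) : ∀ m, m + 1 ≤ n →
    (toSeq ((List.range m).map fun i => (n - 1 - i, n - 1))).count v =
      if v ≤ n - 1 then m - min m (n - 1 - v) else 0 := by
  intro m
  induction m with
  | zero => intro _; simp [toSeq]
  | succ m ih =>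
    intro hm
    rw [List.range_succ, List.map_append, toSeq_append, List.count_append,
      ih (by omega), List.map_singleton, toSeq_singleton, count_range']
    simp only
    split_ifs <;> omega

lemma count_part2 (k v : ℕ) : ∀ m, m ≤ k →
    (toSeq ((List.range m).map fun i => (1, k - i))).count v =
      if v = 0 then 0 else min m (k + 1 - v) := by
  intro m
  induction m with
  | zero =>
    intro _
    simp only [List.range_zero, List.map_nil]
    show List.count v [] = _
    simp only [List.count_nil]
    split_ifs <;> omega
  | succ m ih =>
    intro hm
    rw [List.range_succ, List.map_append, toSeq_append, List.count_append,
      ih (by omega), List.map_singleton, toSeq_singleton, count_range']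
    simp only
    split_ifs <;> omega

lemma count_spindle (n k v : ℕ) (hn : 3 ≤ n) (hk : k ≤ n - 2) :
    (toSeq (spindle n k)).count v =
      (if v ≤ n - 1 then (n - 2 - k) - min (n - 2 - k) (n - 1 - v) else 0) +
      (if 1 ≤ v ∧ v < 1 + (n - 1) then 1 else 0) +
      (if v = 0 then 0 else min k (k + 1 - v)) := by
  unfold spindle
  rw [toSeq_append, toSeq_append, List.count_append, List.count_append,
    count_part1 n v (n - 2 - k) (by omega), count_part2 k v k le_rfl,
    toSeq_singleton, count_range']
  have h2 : (1 : ℕ) + ((n - 1, (1 : ℕ)).1 - (n - 1, (1 : ℕ)).2 + 1) = 1 + (n - 1) := by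
    simp; omega
  simp only
  rw [show n - 1 - 1 + 1 = n - 1 from by omega]

/-- In the spindle at `k`, the value `k+1` occurs exactly once in the
underlying sequence, every other value of `{1, …, n-1}` occurs at least
twice, and in particular there is a unique value occurring exactly once. -/
theorem spindle_unique_once (n k : ℕ) (hn : 3 ≤ n) (hk : k ≤ n - 2) :
    (toSeq (spindle n k)).count (k + 1) = 1 ∧
    (∀ v : ℕ, 1 ≤ v → v ≤ n - 1 → v ≠ k + 1 →
      2 ≤ (toSeq (spindle n k)).count v) ∧
    (∃! v : ℕ, (toSeq (spindle n k)).count v = 1) := by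
  refine ⟨?_, ?_, ⟨k + 1, ?_, fun w hw => ?_⟩⟩
  · rw [count_spindle n k (k + 1) hn hk]; split_ifs <;> omega
  · intro v h1 h2 h3
    rw [count_spindle n k v hn hk]; split_ifs <;> omega
  · show (toSeq (spindle n k)).count (k + 1) = 1
    rw [count_spindle n k (k + 1) hn hk]; split_ifs <;> omega
  · have hw2 : (toSeq (spindle n k)).count w = 1 := hw
    rw [count_spindle n k w hn hk] at hw2
    split_ifs at hw2 <;> omega
end

section
/- Let n ≥ 3 and 0 ≤ k ≤ n−2. In the spindle at k over {1,…,n−1}, each value v ∈ {1,…,n−1} occurs exactly |v − (k+1)| + 1 times in the underlying sequence. -/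
/-!
Each value `v` occurs once in every segment `(p, q)` with `p ≤ v ≤ q`. In the spindle at `k`,
the segments `(s, n-1)` with `k+2 ≤ s ≤ n-1` account for `v - (k+1)` occurrences when `v > k+1`,
the segment `(1, n-1)` for one, and the segments `(1, t)` with `1 ≤ t ≤ k` for `k+1 - v`
occurrences when `v < k+1`.
-/

theorem count_toSeq {L : List (ℕ × ℕ)} (hL : ∀ s ∈ L, s.1 ≤ s.2) (v : ℕ) :
    (toSeq L).count v = L.countP fun s => s.1 ≤ v ∧ v ≤ s.2 := by
  induction L with
  | nil => rfl
  | cons s L ih =>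
    have hs := hL s List.mem_cons_self
    simp only [toSeq, List.flatMap_cons, List.count_append, List.count_range_1'] at ih ⊢
    rw [ih fun t ht => hL t (List.mem_cons_of_mem s ht), List.countP_cons]
    simp only [decide_eq_true_eq]
    split_ifs <;> omega

theorem countP_range_le (a m : ℕ) : (List.range m).countP (a ≤ ·) = m - a := by
  induction m with
  | zero => simp
  | succ m ih =>
    rw [List.range_succ, List.countP_append, ih]
    simp only [List.countP_singleton, decide_eq_true_eq]
    split_ifs <;> omega

theorem countP_range_lt (a m : ℕ) : (List.range m).countP (· < a) = min m a := by
  induction m with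
  | zero => simp
  | succ m ih =>
    rw [List.range_succ, List.countP_append, ih]
    simp only [List.countP_singleton, decide_eq_true_eq]
    split_ifs <;> omega

theorem spindle_segment_le {n k : ℕ} (hn : 2 ≤ n) : ∀ s ∈ spindle n k, s.1 ≤ s.2 := by
  simp only [spindle, List.mem_append, List.mem_map, List.mem_range, List.mem_singleton]
  rintro s ((⟨i, -, rfl⟩ | rfl) | ⟨i, hi, rfl⟩) <;> dsimp only <;> omega

theorem spindle_count_general (n k : ℕ) :
    ∀ v : ℕ, 1 ≤ v → v ≤ n - 1 →
      (toSeq (spindle n k)).count v = ((v : ℤ) - (k + 1)).natAbs + 1 := by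
  intro v hv1 hv2
  have upper : ((List.range (n - 2 - k)).map fun i => (n - 1 - i, n - 1)).countP
      (fun s => s.1 ≤ v ∧ v ≤ s.2) = n - 2 - k - (n - 1 - v) := by
    rw [List.countP_map, ← countP_range_le (n - 1 - v) (n - 2 - k)]
    exact List.countP_congr fun i _ => by simp only [Function.comp, decide_eq_true_eq]; omega
  have lower : ((List.range k).map fun i => (1, k - i)).countP
      (fun s => s.1 ≤ v ∧ v ≤ s.2) = min k (k + 1 - v) := by
    rw [List.countP_map, ← countP_range_lt (k + 1 - v) k]
    exact List.countP_congr fun i _ => by simp only [Function.comp, decide_eq_true_eq]; omega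
  rw [count_toSeq (spindle_segment_le (by omega)), spindle, List.countP_append,
    List.countP_append, upper, lower, List.countP_singleton,
    if_pos (decide_eq_true ⟨hv1, hv2⟩)]
  omega

/-- In the spindle at `k` over `{1, …, n-1}`, each value `v ∈ {1, …, n-1}`
occurs exactly `|v - (k+1)| + 1` times in the underlying sequence. -/
theorem spindle_count (n k : ℕ) (hn : 3 ≤ n) (hk : k ≤ n - 2) :
    ∀ v : ℕ, 1 ≤ v → v ≤ n - 1 →
      (toSeq (spindle n k)).count v = ((v : ℤ) - (k + 1)).natAbs + 1 :=
  spindle_count_general n k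
end

section
/- Let n ≥ 3 and let G be a dot irreducible sawtooth dot graph over {1,…,n−1} with segment list [(p_1,q_1),…,(p_r,q_r)]. Suppose that for some indices i < j and some value 2 ≤ k ≤ n−1 one has (p_i,q_i) = (1,k) and (p_j,q_j) = (1,k−1). Then there is no index l with i < l < j and q_l ≤ k; that is, every segment lying strictly between these two segments ends above k. -/
theorem DotReducible.of_box {L : List (ℕ × ℕ)} {i j : Fin L.length} (hij : i < j)
    (hp : (L.get i).1 ≤ (L.get j).1) (hq : (L.get i).2 ≤ (L.get j).2) : DotReducible L :=
  Or.inr <| Or.inl ⟨i, j, hij, hp, hq⟩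

theorem DotReducible.of_hexagon_two {L : List (ℕ × ℕ)} {i j l : Fin L.length}
    (hij : i < j) (hjl : j < l) (hp : (L.get i).1 ≤ (L.get l).1)
    (hq : (L.get j).2 ≤ (L.get l).2) (hpq : (L.get j).1 ≤ (L.get i).2) : DotReducible L :=
  Or.inr <| Or.inr <| Or.inr <| Or.inl ⟨i, j, l, hij, hjl, hp, hq, hpq⟩

theorem between_segments_end_high_general (n : ℕ)
    (L : List (ℕ × ℕ)) (hL : IsSawtooth n L) (hirr : ¬ DotReducible L)
    (k : ℕ)
    (i j : Fin L.length)
    (hi : L.get i = (1, k)) (hj : L.get j = (1, k - 1)) :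
    ∀ l : Fin L.length, i < l → l < j → k < (L.get l).2 := by
  intro l hil hlj
  obtain ⟨hp, hpq, -⟩ := hL.1 _ (L.get_mem l)
  by_contra! hle
  rcases hle.eq_or_lt with heq | hlt
  · exact hirr <| .of_box hil (by rw [hi]; exact hp) (by rw [hi]; omega)
  · exact hirr <| .of_hexagon_two hil hlj (by rw [hi, hj]) (by rw [hj]; omega)
      (by rw [hi]; omega)

/-- In a dot irreducible sawtooth dot graph, if segment `i` is `(1, k)` and a
later segment `j` is `(1, k-1)` (with `2 ≤ k ≤ n-1`), then every segment
strictly between them ends above `k`. -/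
theorem between_segments_end_high (n : ℕ) (hn : 3 ≤ n)
    (L : List (ℕ × ℕ)) (hL : IsSawtooth n L) (hirr : ¬ DotReducible L)
    (k : ℕ) (hk1 : 2 ≤ k) (hk2 : k ≤ n - 1)
    (i j : Fin L.length) (hij : i < j)
    (hi : L.get i = (1, k)) (hj : L.get j = (1, k - 1)) :
    ∀ l : Fin L.length, i < l → l < j → k < (L.get l).2 :=
  between_segments_end_high_general n L hL hirr k i j hi hj
end

section
/- Let n ≥ 3 and let G be a maximal dot irreducible sawtooth dot graph over {1,…,n−1} whose first maximal ascending segment is (1, n−1) (i.e. there are no dots to the left of a segment running from 1 to n−1). Then G is the lower complete triangle, i.e. its segment list is [(1,n−1),(1,n−2),…,(1,1)]. -/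
/-!
Since the first segment starts at level `1`, two right ends `qᵢ ≤ qⱼ` with `i < j` would give a
box (`i = 0`) or a double hexagon (`0 < i`). So the right ends strictly decrease, the `i`-th segment
lies in `[1, n-1-i]`, and the dot sequence is a subsequence of that of the lower triangle, segment by
segment. The lower triangle is itself dot irreducible, so by maximality both dot sequences agree,
and counting dots segment by segment forces every segment to be all of `[1, n-1-i]`.
-/

theorem List.range'_sublist_range' {a b k l : ℕ} (hba : b ≤ a) (hkl : a + k ≤ b + l) :
    (List.range' a k).Sublist (List.range' b l) := by
  have hsplit := @List.range'_append b (a - b) (l - (a - b)) 1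
  rw [Nat.one_mul, Nat.add_sub_cancel' hba, Nat.add_sub_cancel' (by omega)] at hsplit
  rw [← hsplit]
  exact (List.range'_sublist_right.mpr (by omega)).trans (List.sublist_append_right _ _)

theorem toSeq_cons (s : ℕ × ℕ) (L : List (ℕ × ℕ)) :
    toSeq (s :: L) = List.range' s.1 (s.2 - s.1 + 1) ++ toSeq L :=
  List.flatMap_cons

def lowerTriangle (m : ℕ) : List (ℕ × ℕ) :=
  (List.range m).map fun i => (1, m - i)

theorem lowerTriangle_succ (m : ℕ) : lowerTriangle (m + 1) = (1, m + 1) :: lowerTriangle m := by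
  simp only [lowerTriangle, List.range_succ_eq_map, List.map_cons, List.map_map]
  congr 2
  funext i
  simp

theorem toSeq_lowerTriangle_succ (m : ℕ) :
    toSeq (lowerTriangle (m + 1)) = List.range' 1 (m + 1) ++ toSeq (lowerTriangle m) := by
  rw [lowerTriangle_succ, toSeq_cons, Nat.add_sub_cancel]

theorem pairwise_snd_lowerTriangle (m : ℕ) : (lowerTriangle m).Pairwise fun s t => t.2 < s.2 := by
  induction m with
  | zero => simp [lowerTriangle]
  | succ m ih =>
    rw [lowerTriangle_succ, List.pairwise_cons]
    refine ⟨fun t ht => ?_, ih⟩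
    simp only [lowerTriangle, List.mem_map, List.mem_range] at ht
    obtain ⟨i, -, rfl⟩ := ht
    omega

theorem isSawtooth_lowerTriangle (n : ℕ) : IsSawtooth n (lowerTriangle (n - 1)) := by
  refine ⟨fun s hs => ?_, fun i h => ?_⟩
  · simp only [lowerTriangle, List.mem_map, List.mem_range] at hs
    obtain ⟨i, hi, rfl⟩ := hs
    omega
  · simp only [lowerTriangle, List.length_map, List.length_range] at h
    simp only [lowerTriangle, List.get_eq_getElem, List.getElem_map, List.getElem_range]
    omega

theorem not_dotReducible_of_pairwise_snd {L : List (ℕ × ℕ)}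
    (hq : L.Pairwise fun s t => t.2 < s.2)
    (hline : ∀ (i : ℕ) (h : i + 1 < L.length),
      (L.get ⟨i, Nat.lt_of_succ_lt h⟩).2 ≠ (L.get ⟨i + 1, h⟩).1) :
    ¬ DotReducible L := by
  have hlt := List.pairwise_iff_get.mp hq
  rintro (⟨i, h, heq⟩ | ⟨i, j, hij, -, hle⟩ | ⟨i, j, l, hij, hjl, -, hle, -⟩ |
    ⟨i, j, l, -, hjl, -, hle, -⟩ | ⟨i, j, l, hij, -, hle, -, -⟩ | ⟨i, j, l, m, -, -, hlm, -, hle⟩)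
  · exact hline i h heq
  · exact (hlt i j hij).not_ge hle
  · exact (hlt i l (hij.trans hjl)).not_ge hle
  · exact (hlt j l hjl).not_ge hle
  · exact (hlt i j hij).not_ge hle
  · exact (hlt l m hlm).not_ge hle

theorem not_dotReducible_lowerTriangle (m : ℕ) : ¬ DotReducible (lowerTriangle m) := by
  refine not_dotReducible_of_pairwise_snd (pairwise_snd_lowerTriangle m) fun i h => ?_
  simp only [lowerTriangle, List.length_map, List.length_range] at h
  simp only [lowerTriangle, List.get_eq_getElem, List.getElem_map, List.getElem_range]
  omega

theorem pairwise_snd_of_not_dotReducible_cons {a : ℕ × ℕ} {L : List (ℕ × ℕ)}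
    (hirr : ¬ DotReducible (a :: L)) (ha : ∀ t ∈ L, a.1 ≤ t.1) :
    (a :: L).Pairwise fun s t => t.2 < s.2 := by
  have hmin : ∀ i, a.1 ≤ ((a :: L).get i).1 := fun i =>
    (List.forall_mem_cons.mpr ⟨le_rfl, ha⟩ : ∀ t ∈ a :: L, a.1 ≤ t.1) _ (List.get_mem _ _)
  refine List.pairwise_iff_get.mpr fun i j hij => ?_
  by_contra! hle
  apply hirr
  have h0 : 0 < (a :: L).length := Nat.succ_pos _
  rcases Nat.eq_zero_or_pos i with hi | hi
  · obtain rfl : i = ⟨0, h0⟩ := Fin.ext hi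
    exact Or.inr (Or.inl ⟨_, j, hij, hmin j, hle⟩)
  · exact Or.inr (Or.inr (Or.inr (Or.inr (Or.inr
      ⟨⟨0, h0⟩, i, i, j, Fin.mk_lt_of_lt_val hi, le_rfl, hij, hmin i, hle⟩))))

section SegmentsBelowTriangle

variable {L : List (ℕ × ℕ)} {m : ℕ}

theorem toSeq_sublist_lowerTriangle (hseg : ∀ s ∈ L, 1 ≤ s.1 ∧ s.1 ≤ s.2 ∧ s.2 ≤ m)
    (hq : L.Pairwise fun s t => t.2 < s.2) : (toSeq L).Sublist (toSeq (lowerTriangle m)) := by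
  induction L generalizing m with
  | nil => exact List.nil_sublist _
  | cons s L ih =>
    obtain ⟨hs1, hs12, hs2⟩ := hseg s List.mem_cons_self
    obtain ⟨m, rfl⟩ : ∃ m', m = m' + 1 := ⟨m - 1, by omega⟩
    rw [List.pairwise_cons] at hq
    rw [toSeq_cons, toSeq_lowerTriangle_succ]
    refine (List.range'_sublist_range' hs1 (by omega)).append (ih (fun t ht => ?_) hq.2)
    have := hq.1 t ht
    have := hseg t (List.mem_cons_of_mem _ ht)
    omega

theorem eq_lowerTriangle_of_toSeq_eq (hseg : ∀ s ∈ L, 1 ≤ s.1 ∧ s.1 ≤ s.2 ∧ s.2 ≤ m)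
    (hq : L.Pairwise fun s t => t.2 < s.2) (heq : toSeq L = toSeq (lowerTriangle m)) :
    L = lowerTriangle m := by
  induction L generalizing m with
  | nil =>
    cases m with
    | zero => rfl
    | succ m =>
      rw [toSeq_lowerTriangle_succ, List.range'_succ] at heq
      simp [toSeq] at heq
  | cons s L ih =>
    obtain ⟨hs1, hs12, hs2⟩ := hseg s List.mem_cons_self
    obtain ⟨m, rfl⟩ : ∃ m', m = m' + 1 := ⟨m - 1, by omega⟩
    rw [List.pairwise_cons] at hq
    have htail : ∀ t ∈ L, 1 ≤ t.1 ∧ t.1 ≤ t.2 ∧ t.2 ≤ m := fun t ht => by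
      have := hq.1 t ht
      have := hseg t (List.mem_cons_of_mem _ ht)
      omega
    rw [toSeq_cons, toSeq_lowerTriangle_succ] at heq
    have hlen := congrArg List.length heq
    have hsub := (toSeq_sublist_lowerTriangle htail hq.2).length_le
    simp only [List.length_append, List.length_range'] at hlen
    obtain rfl : s = (1, m + 1) := Prod.ext (by omega) (by omega)
    rw [lowerTriangle_succ, ih htail hq.2 (List.append_cancel_left heq)]

end SegmentsBelowTriangle

theorem maximal_first_segment_lower_triangle_general (n : ℕ)
    (L : List (ℕ × ℕ)) (hL : MaxDotIrreducible n L)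
    (hhead : L.head? = some (1, n - 1)) :
    L = (List.range (n - 1)).map fun i => (1, n - 1 - i) := by
  obtain ⟨⟨hseg, -⟩, hirr, hmax⟩ := hL
  obtain ⟨L, rfl⟩ := List.head?_eq_some_iff.mp hhead
  have hq := pairwise_snd_of_not_dotReducible_cons hirr
    fun t ht => (hseg t (List.mem_cons_of_mem _ ht)).1
  refine eq_lowerTriangle_of_toSeq_eq hseg hq (by_contra fun hne => ?_)
  exact not_dotReducible_lowerTriangle (n - 1)
    (hmax _ (isSawtooth_lowerTriangle n) (toSeq_sublist_lowerTriangle hseg hq) hne)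

/-- A maximal dot irreducible sawtooth dot graph over `{1, …, n-1}` whose
first maximal ascending segment is `(1, n-1)` is the lower complete
triangle `[(1,n-1),(1,n-2),…,(1,1)]`. -/
theorem maximal_first_segment_lower_triangle (n : ℕ) (hn : 3 ≤ n)
    (L : List (ℕ × ℕ)) (hL : MaxDotIrreducible n L)
    (hhead : L.head? = some (1, n - 1)) :
    L = (List.range (n - 1)).map fun i => (1, n - 1 - i) :=
  maximal_first_segment_lower_triangle_general n L hL hhead
end

section
/- Let n ≥ 3. Every dot irreducible sawtooth dot graph over {1,…,n−1} has length at most n(n−1)² (since each of the n−1 possible values occurs at most n(n−1) times). Consequently, the set of dot irreducible sawtooth dot graphs over {1,…,n−1} is finite. -/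
lemma Finset.exists_lt_le_of_card_lt {α : Type*} [LinearOrder α] {s : Finset α} {k : ℕ}
    (f : Fin k → α) (hf : ∀ i, f i ∈ s) (hk : s.card < k) :
    ∃ i j, i < j ∧ f i ≤ f j := by
  by_contra! hanti
  have hinj : Function.Injective fun i => (⟨f i, hf i⟩ : s) := fun i j hij =>
    (StrictAnti.injective hanti) (congrArg Subtype.val hij)
  have := Fintype.card_le_of_injective _ hinj
  simp only [Fintype.card_fin, Fintype.card_coe] at this
  omega

lemma List.finite_length_le_of_forall_mem {α : Type*} {s : Set α} (hs : s.Finite) (N : ℕ) :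
    {l : List α | l.length ≤ N ∧ ∀ x ∈ l, x ∈ s}.Finite := by
  have := hs.to_subtype
  refine ((List.finite_length_le s N).image (List.map Subtype.val)).subset ?_
  rintro l ⟨hlen, hmem⟩
  exact ⟨l.pmap Subtype.mk hmem, by simpa using hlen, by simp [List.map_pmap]⟩

namespace IsSawtooth

variable {n : ℕ} {L : List (ℕ × ℕ)}

lemma fst_mem_Icc (hS : IsSawtooth n L) {s : ℕ × ℕ} (hs : s ∈ L) :
    s.1 ∈ Finset.Icc 1 (n - 1) :=
  have := hS.1 s hs
  Finset.mem_Icc.mpr ⟨this.1, this.2.1.trans this.2.2⟩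

lemma snd_mem_Icc (hS : IsSawtooth n L) {s : ℕ × ℕ} (hs : s ∈ L) :
    s.2 ∈ Finset.Icc 1 (n - 1) :=
  have := hS.1 s hs
  Finset.mem_Icc.mpr ⟨this.1.trans this.2.1, this.2.2⟩

lemma length_toSeq_le (hS : IsSawtooth n L) : (toSeq L).length ≤ L.length * (n - 1) := by
  rw [toSeq, List.length_flatMap]
  refine (List.sum_le_card_nsmul _ (n - 1) fun x hx => ?_).trans_eq (by simp)
  obtain ⟨s, hs, rfl⟩ := List.mem_map.mp hx
  have := hS.1 s hs
  simp only [List.length_range']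
  omega

end IsSawtooth

lemma DotReducible.of_doubleHexagon {L : List (ℕ × ℕ)} {i j l m : Fin L.length}
    (hij : i < j) (hjl : j ≤ l) (hlm : l < m)
    (hp : (L.get i).1 ≤ (L.get j).1) (hq : (L.get l).2 ≤ (L.get m).2) : DotReducible L :=
  .inr <| .inr <| .inr <| .inr <| .inr ⟨i, j, l, m, hij, hjl, hlm, hp, hq⟩

/-- By pigeonhole, the first `n` segments contain a pair with `pᵢ ≤ pⱼ` and the last `n`
segments a pair with `q_l ≤ q_m`; with `2n - 1` segments the two blocks overlap in at most
one index, which yields a double hexagon. -/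
theorem IsSawtooth.length_le_of_not_dotReducible {n : ℕ} {L : List (ℕ × ℕ)}
    (hS : IsSawtooth n L) (hI : ¬ DotReducible L) : L.length ≤ 2 * (n - 1) := by
  by_contra! hlong
  set r := L.length
  have hcard : (Finset.Icc 1 (n - 1)).card < n - 1 + 1 := by simp
  obtain ⟨i, j, hij, hp⟩ := Finset.exists_lt_le_of_card_lt
    (fun a : Fin (n - 1 + 1) => (L.get ⟨a, by omega⟩).1)
    (fun _ => hS.fst_mem_Icc (List.get_mem _ _)) hcard
  obtain ⟨l, m, hlm, hq⟩ := Finset.exists_lt_le_of_card_lt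
    (fun a : Fin (n - 1 + 1) => (L.get ⟨r - (n - 1 + 1) + a, by omega⟩).2)
    (fun _ => hS.snd_mem_Icc (List.get_mem _ _)) hcard
  refine hI (DotReducible.of_doubleHexagon (j := ⟨j, by omega⟩)
    (l := ⟨r - (n - 1 + 1) + l, by omega⟩) hij ?_ ?_ hp hq)
  · change (j : ℕ) ≤ r - (n - 1 + 1) + l
    omega
  · change r - (n - 1 + 1) + (l : ℕ) < r - (n - 1 + 1) + m
    omega

theorem dot_irreducible_length_bound_general (n : ℕ) :
    (∀ L : List (ℕ × ℕ), IsSawtooth n L → ¬ DotReducible L →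
      (toSeq L).length ≤ n * (n - 1) ^ 2) ∧
    {L : List (ℕ × ℕ) | IsSawtooth n L ∧ ¬ DotReducible L}.Finite := by
  constructor
  · intro L hS hI
    have hcoef : 2 * (n - 1) ^ 2 ≤ n * (n - 1) ^ 2 := by
      rcases Nat.lt_or_ge n 2 with h | h
      · simp [show n - 1 = 0 by omega]
      · exact Nat.mul_le_mul_right _ h
    calc (toSeq L).length ≤ L.length * (n - 1) := hS.length_toSeq_le
      _ ≤ 2 * (n - 1) * (n - 1) :=
          Nat.mul_le_mul_right _ (hS.length_le_of_not_dotReducible hI)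
      _ = 2 * (n - 1) ^ 2 := by ring
      _ ≤ n * (n - 1) ^ 2 := hcoef
  · let segments := Finset.Icc 1 (n - 1) ×ˢ Finset.Icc 1 (n - 1)
    refine (List.finite_length_le_of_forall_mem segments.finite_toSet (2 * (n - 1))).subset ?_
    rintro L ⟨hS, hI⟩
    refine ⟨hS.length_le_of_not_dotReducible hI, fun s hs => ?_⟩
    exact Finset.mem_product.mpr ⟨hS.fst_mem_Icc hs, hS.snd_mem_Icc hs⟩

/-- Every dot irreducible sawtooth dot graph over `{1, …, n-1}` has length at
most `n(n-1)²`; consequently there are only finitely many dot irreducible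
sawtooth dot graphs over `{1, …, n-1}`. -/
theorem dot_irreducible_length_bound (n : ℕ) (hn : 3 ≤ n) :
    (∀ L : List (ℕ × ℕ), IsSawtooth n L → ¬ DotReducible L →
      (toSeq L).length ≤ n * (n - 1) ^ 2) ∧
    {L : List (ℕ × ℕ) | IsSawtooth n L ∧ ¬ DotReducible L}.Finite :=
  dot_irreducible_length_bound_general n
end
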